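/- arXiv:2410.20483 — 8 statements merged into one kernel-verified Lean document; each statement's English description precedes it below -/
import Mathlib

section
/- Let DT be a decision tree over ℝ^p and let x ∈ ℝ^p be a query with DT(x) = positive, captured by the leaf N. Suppose the sibling of N (the other child of N's parent) is a leaf labeled negative whose region is nonempty. Then SEV_T(x) = 1, i.e., min{‖x − z‖₀ : z ∈ ℝ^p, DT(z) = negative} = 1: there exists z differing from x in exactly one coordinate with DT(z) = negative, and every z with DT(z) = negative differs from x in at least one coordinate. -/
/-- A decision tree over `ℝ^p`: each internal node is labeled by a feature index and a
threshold, each leaf by a class (`true` = positive, `false` = negative). -/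
inductive DTree (p : ℕ) : Type where
  | leaf (label : Bool) : DTree p
  | node (j : Fin p) (t : ℝ) (left right : DTree p) : DTree p

namespace DTree

/-- Evaluation: at a node `(j, t)` go left if `x j ≤ t`, else right. -/
noncomputable def eval {p : ℕ} : DTree p → (Fin p → ℝ) → Bool
  | .leaf b, _ => b
  | .node j t l r, x => if x j ≤ t then l.eval x else r.eval x

/-- Subtree at a path from the root (`false` = left, `true` = right). -/
def subtreeAt {p : ℕ} : DTree p → List Bool → Option (DTree p)
  | T, [] => some T
  | .leaf _, _ :: _ => none
  | .node _ _ l r, d :: ds => if d then r.subtreeAt ds else l.subtreeAt ds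

/-- `T.follows π x` means the evaluation of `x` from the root follows the path `π`. -/
def follows {p : ℕ} : DTree p → List Bool → (Fin p → ℝ) → Prop
  | _, [], _ => True
  | .leaf _, _ :: _, _ => False
  | .node j t l r, d :: ds, x =>
      if d then ¬ x j ≤ t ∧ r.follows ds x else x j ≤ t ∧ l.follows ds x

/-- There is a leaf with label `b` at path `π`. -/
def IsLeafAt {p : ℕ} (T : DTree p) (π : List Bool) (b : Bool) : Prop :=
  T.subtreeAt π = some (.leaf b)

/-- Region of the node at path `π`: all points whose decision path passes through it. -/
def regionAt {p : ℕ} (T : DTree p) (π : List Bool) : Set (Fin p → ℝ) :=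
  {x | T.follows π x}

end DTree

/-- `align x r S` replaces the coordinates of `x` indexed by `S` with those of `r`. -/
def align {p : ℕ} (x r : Fin p → ℝ) (S : Finset (Fin p)) : Fin p → ℝ :=
  fun j => if j ∈ S then r j else x j

/-- Sparse Explanation Value (minus): minimum number of coordinates of the query `x`
that must be aligned to the reference `r` to obtain a negative prediction. -/
noncomputable def SEVminus {p : ℕ} (f : (Fin p → ℝ) → Bool) (x r : Fin p → ℝ) : ℕ :=
  sInf {k : ℕ | ∃ S : Finset (Fin p), f (align x r S) = false ∧ S.card = k}


namespace DTree

theorem eval_of_follows_leaf {p : ℕ} :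
    ∀ (T : DTree p) (π : List Bool) (b : Bool) (x : Fin p → ℝ),
      T.subtreeAt π = some (.leaf b) → T.follows π x → T.eval x = b := by
  intro T π
  induction π generalizing T with
  | nil =>
    intro b x h _
    simp [subtreeAt] at h
    subst h; rfl
  | cons dd ds ih =>
    intro b x h hf
    cases T with
    | leaf b' => simp [subtreeAt] at h
    | node j t l r =>
      simp only [subtreeAt, follows] at h hf
      cases dd with
      | false =>
        simp only [Bool.false_eq_true, if_false] at h hf
        show (if x j ≤ t then l.eval x else r.eval x) = b
        rw [if_pos hf.1]
        exact ih l b x h hf.2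
      | true =>
        simp only [if_pos rfl] at h hf
        show (if x j ≤ t then l.eval x else r.eval x) = b
        rw [if_neg hf.1]
        exact ih r b x h hf.2

theorem subtreeAt_append {p : ℕ} :
    ∀ (T : DTree p) (σ π : List Bool),
      T.subtreeAt (σ ++ π) = (T.subtreeAt σ).bind (·.subtreeAt π) := by
  intro T σ
  induction σ generalizing T with
  | nil => intro π; simp [subtreeAt]
  | cons dd ds ih =>
    intro π
    cases T with
    | leaf b => simp [subtreeAt]
    | node j t l r =>
      cases dd <;> simp [subtreeAt, ih]

theorem follows_append {p : ℕ} :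
    ∀ (T T' : DTree p) (σ π : List Bool) (x : Fin p → ℝ),
      T.subtreeAt σ = some T' →
      (T.follows (σ ++ π) x ↔ T.follows σ x ∧ T'.follows π x) := by
  intro T T' σ
  induction σ generalizing T with
  | nil =>
    intro π x h
    simp [subtreeAt] at h
    subst h
    simp [follows]
  | cons dd ds ih =>
    intro π x h
    cases T with
    | leaf b => simp [subtreeAt] at h
    | node j t l r =>
      cases dd with
      | false =>
        simp only [subtreeAt, Bool.false_eq_true, if_false] at h
        show (x j ≤ t ∧ l.follows (ds ++ π) x) ↔
          (x j ≤ t ∧ l.follows ds x) ∧ T'.follows π x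
        rw [ih l π x h]
        tauto
      | true =>
        simp only [subtreeAt, if_pos rfl] at h
        show (¬ x j ≤ t ∧ r.follows (ds ++ π) x) ↔
          (¬ x j ≤ t ∧ r.follows ds x) ∧ T'.follows π x
        rw [ih r π x h]
        tauto

theorem follows_mixed {p : ℕ} :
    ∀ (T : DTree p) (π : List Bool) (x w z : Fin p → ℝ),
      (∀ i, z i = x i ∨ z i = w i) →
      T.follows π x → T.follows π w → T.follows π z := by
  intro T π
  induction π generalizing T with
  | nil => intro _ _ _ _ _ _; cases T <;> exact trivial
  | cons dd ds ih =>
    intro x w z hz hx hw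
    cases T with
    | leaf b => exact hx
    | node j t l r =>
      cases dd with
      | false =>
        simp only [follows, Bool.false_eq_true, if_false] at hx hw ⊢
        refine ⟨?_, ih l x w z hz hx.2 hw.2⟩
        rcases hz j with h | h <;> rw [h]
        · exact hx.1
        · exact hw.1
      | true =>
        simp only [follows, if_pos rfl] at hx hw ⊢
        refine ⟨?_, ih r x w z hz hx.2 hw.2⟩
        rcases hz j with h | h <;> rw [h]
        · exact hx.1
        · exact hw.1

end DTree

/-- If the query `x` is captured by a positive leaf `N` (at path `σ ++ [d]`)
whose sibling leaf (at path `σ ++ [!d]`) is labeled negative and has nonempty region,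
then `SEV_T(x) = 1`. -/
theorem sevT_eq_one_of_sibling_negative_leaf
    {p : ℕ} (DT : DTree p) (x : Fin p → ℝ) (σ : List Bool) (d : Bool)
    (hcapt : DT.follows (σ ++ [d]) x)
    (hleafN : DT.IsLeafAt (σ ++ [d]) true)
    (hpos : DT.eval x = true)
    (hsib : DT.IsLeafAt (σ ++ [!d]) false)
    (hne : (DT.regionAt (σ ++ [!d])).Nonempty) :
    sInf {k : ℕ | ∃ z : Fin p → ℝ, DT.eval z = false ∧ hammingDist x z = k} = 1 ∧
    (∃ z : Fin p → ℝ, DT.eval z = false ∧ hammingDist x z = 1) ∧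
    (∀ z : Fin p → ℝ, DT.eval z = false → 1 ≤ hammingDist x z) := by
  -- extract the node at path σ
  have hN := hleafN
  rw [DTree.IsLeafAt, DTree.subtreeAt_append] at hN
  obtain ⟨T', hT', hT'd⟩ : ∃ T', DT.subtreeAt σ = some T' ∧
      T'.subtreeAt [d] = some (.leaf true) := by
    cases h : DT.subtreeAt σ with
    | none => rw [h] at hN; simp at hN
    | some T' => rw [h] at hN; exact ⟨T', rfl, hN⟩
  have hS := hsib
  rw [DTree.IsLeafAt, DTree.subtreeAt_append, hT'] at hS
  simp only [Option.bind_some] at hS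
  obtain ⟨j, t, l, r, rfl⟩ : ∃ j t l r, T' = DTree.node j t l r := by
    cases T' with
    | leaf b => simp [DTree.subtreeAt] at hT'd
    | node j t l r => exact ⟨j, t, l, r, rfl⟩
  -- decompose follows for x
  have hx := (DTree.follows_append DT _ σ [d] x hT').mp hcapt
  obtain ⟨w, hw⟩ := hne
  have hwf : DT.follows (σ ++ [!d]) w := hw
  have hwd := (DTree.follows_append DT _ σ [!d] w hT').mp hwf
  -- the key inequality: x j ≠ w j
  have hxw : x j ≠ w j := by
    have h1 := hx.2
    have h2 := hwd.2
    cases d <;> simp [DTree.follows] at h1 h2 <;> intro h <;> rw [h] at h1 <;>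
      exact absurd h1 (by simpa using h2)
  set z : Fin p → ℝ := Function.update x j (w j) with hzdef
  have hzmix : ∀ i, z i = x i ∨ z i = w i := by
    intro i
    by_cases h : i = j
    · subst h; right; simp [hzdef]
    · left; simp [hzdef, Function.update_of_ne h]
  have hzσ : DT.follows σ z := DTree.follows_mixed DT σ x w z hzmix hx.1 hwd.1
  have hzd : (DTree.node j t l r).follows [!d] z := by
    have h2 := hwd.2
    have hzj : z j = w j := by simp [hzdef]
    cases d <;> simp [DTree.follows] at h2 ⊢ <;> rw [hzj] <;> exact h2
  have hzf : DT.follows (σ ++ [!d]) z :=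
    (DTree.follows_append DT _ σ [!d] z hT').mpr ⟨hzσ, hzd⟩
  have hzeval : DT.eval z = false :=
    DTree.eval_of_follows_leaf DT (σ ++ [!d]) false z hsib hzf
  have hdist : hammingDist x z = 1 := by
    have : (Finset.univ.filter fun i => x i ≠ z i) = {j} := by
      ext i
      simp only [Finset.mem_filter, Finset.mem_univ, true_and, Finset.mem_singleton]
      constructor
      · intro h
        by_contra hij
        exact h (by simp [hzdef, Function.update_of_ne hij])
      · rintro rfl
        simp [hzdef]
        exact hxw
    simp [hammingDist, this]
  have hlb : ∀ y : Fin p → ℝ, DT.eval y = false → 1 ≤ hammingDist x y := by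
    intro y hy
    rcases Nat.eq_zero_or_pos (hammingDist x y) with h | h
    · exfalso
      have : x = y := hammingDist_eq_zero.mp h
      rw [← this, hpos] at hy
      simp at hy
    · exact h
  refine ⟨?_, ⟨z, hzeval, hdist⟩, hlb⟩
  have h1 : (1 : ℕ) ∈ {k : ℕ | ∃ z : Fin p → ℝ, DT.eval z = false ∧ hammingDist x z = k} :=
    ⟨z, hzeval, hdist⟩
  refine le_antisymm (Nat.sInf_le h1) (le_csInf ⟨1, h1⟩ ?_)
  rintro k ⟨y, hy, rfl⟩
  exact hlb y hy
end

section
/- Let DT be a decision tree over ℝ^p, let x ∈ ℝ^p, and let N be a node on the decision path of x labeled by feature index j and threshold t. Suppose the child of N on the branch not taken by x is a leaf L whose region is nonempty. Then there exists z ∈ ℝ^p with z_k = x_k for every coordinate k ≠ j such that z is captured by L; in particular DT(z) equals the label of L. -/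
/-!
The region of a path is a box: each node on it constrains a single coordinate. So if `x`
follows the path to a node `N = (j, t)` and `y` lies in the region of a child `L` of `N`,
the point `z` equal to `x` except `z j = y j` still follows the path to `N` (each of its
coordinates comes from `x` or `y`), and it takes the same branch at `N` as `y`, since that
branch is decided by coordinate `j` alone.
-/

namespace DTree

variable {p : ℕ}

theorem follows_of_forall_eq_or_eq {T : DTree p} {π : List Bool} {x y z : Fin p → ℝ}
    (hx : T.follows π x) (hy : T.follows π y) (hz : ∀ k, z k = x k ∨ z k = y k) :
    T.follows π z := by
  induction π generalizing T with
  | nil => cases T <;> trivial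
  | cons d ds ih =>
    cases T with
    | leaf c => exact hx.elim
    | node j t l r =>
      have hzj : (z j ≤ t ↔ x j ≤ t) ∨ (z j ≤ t ↔ y j ≤ t) := by
        rcases hz j with h | h <;> simp [h]
      cases d <;> simp only [follows, Bool.false_eq_true, if_true, if_false] at hx hy ⊢ <;>
        exact ⟨by tauto, ih hx.2 hy.2⟩

theorem follows_append_iff {T T' : DTree p} {π : List Bool} (h : T.subtreeAt π = some T')
    (π' : List Bool) (z : Fin p → ℝ) :
    T.follows (π ++ π') z ↔ T.follows π z ∧ T'.follows π' z := by
  induction π generalizing T with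
  | nil =>
    simp only [subtreeAt, Option.some.injEq] at h
    simp [h, follows]
  | cons d ds ih =>
    cases T with
    | leaf c => simp [subtreeAt] at h
    | node j t l r =>
      cases d <;> simp only [subtreeAt, Bool.false_eq_true, if_true, if_false] at h <;>
        simp only [List.cons_append, follows, Bool.false_eq_true, if_true, if_false,
          ih h, and_assoc]

theorem eval_eq_of_subtreeAt_of_follows {T T' : DTree p} {π : List Bool} {z : Fin p → ℝ}
    (h : T.subtreeAt π = some T') (hz : T.follows π z) : T.eval z = T'.eval z := by
  induction π generalizing T with
  | nil =>
    simp only [subtreeAt, Option.some.injEq] at h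
    rw [h]
  | cons d ds ih =>
    cases T with
    | leaf c => exact hz.elim
    | node j t l r =>
      cases d <;> simp only [subtreeAt, follows, Bool.false_eq_true, if_true, if_false]
        at h hz
      · rw [eval, if_pos hz.1, ih h hz.2]
      · rw [eval, if_neg hz.1, ih h hz.2]

theorem node_follows_singleton_congr {j : Fin p} {t : ℝ} {l r : DTree p} (d : Bool)
    {y z : Fin p → ℝ} (h : z j = y j) :
    (node j t l r).follows [d] z ↔ (node j t l r).follows [d] y := by
  cases d <;> simp [follows, h]

theorem exists_update_mem_regionAt_append_singleton {T l r : DTree p} {π : List Bool}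
    {j : Fin p} {t : ℝ} {x : Fin p → ℝ} (hx : T.follows π x)
    (hnode : T.subtreeAt π = some (node j t l r)) {d : Bool}
    (hne : (T.regionAt (π ++ [d])).Nonempty) :
    ∃ s : ℝ, Function.update x j s ∈ T.regionAt (π ++ [d]) := by
  obtain ⟨y, hy : T.follows (π ++ [d]) y⟩ := hne
  rw [follows_append_iff hnode] at hy
  refine ⟨y j, (follows_append_iff hnode _ _).2 ⟨?_, ?_⟩⟩
  · refine follows_of_forall_eq_or_eq hx hy.1 fun k => ?_
    rcases eq_or_ne k j with rfl | hk
    · simp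
    · exact Or.inl (Function.update_of_ne hk _ _)
  · exact (node_follows_singleton_congr d (Function.update_self _ _ _)).2 hy.2

end DTree

/-- If a node on the decision path of `x` splits on feature `j` and the
child on the branch not taken by `x` is a leaf `L` (labeled `b`) with nonempty region,
then some `z` agreeing with `x` off coordinate `j` is captured by `L`, and `DT(z) = b`. -/
theorem exists_one_coordinate_change_to_untaken_leaf
    {p : ℕ} (DT : DTree p) (x : Fin p → ℝ)
    (π : List Bool) (j : Fin p) (t : ℝ) (l r : DTree p) (b : Bool)
    (hfol : DT.follows π x)
    (hnode : DT.subtreeAt π = some (.node j t l r))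
    (hleaf : DT.IsLeafAt (π ++ [decide (x j ≤ t)]) b)
    (hne : (DT.regionAt (π ++ [decide (x j ≤ t)])).Nonempty) :
    ∃ z : Fin p → ℝ, (∀ k : Fin p, k ≠ j → z k = x k) ∧
      z ∈ DT.regionAt (π ++ [decide (x j ≤ t)]) ∧ DT.eval z = b := by
  obtain ⟨s, hs⟩ := DTree.exists_update_mem_regionAt_append_singleton hfol hnode hne
  exact ⟨Function.update x j s, fun k hk => Function.update_of_ne hk _ _, hs,
    DTree.eval_eq_of_subtreeAt_of_follows hleaf hs⟩
end

section
/- Let DT be a decision tree over ℝ^p, let x ∈ ℝ^p satisfy DT(x) = positive, and suppose there exists at least one point predicted negative by DT. Then, taking as admissible references all points captured by negatively predicted leaves of DT, the minimum of SEV⁻(DT, x, r) over all references r with DT(r) = negative equals min{‖x − z‖₀ : z ∈ ℝ^p, DT(z) = negative} = SEV_T(x). In other words, with the set of all negatively predicted leaves as reference points, both SEV⁻ and the ℓ0 (edit) distance between the query and the SEV⁻ explanation are minimized. -/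
/-- With all negatively predicted points admissible as references, the
minimum of `SEV⁻(DT, x, r)` over references `r` with `DT(r) = negative` equals the
minimum ℓ0 distance from `x` to the negatively predicted region, i.e. `SEV_T(x)`. -/
theorem sevMinus_over_negative_refs_eq_sevT
    {p : ℕ} (DT : DTree p) (x : Fin p → ℝ)
    (hpos : DT.eval x = true)
    (hne : ∃ z : Fin p → ℝ, DT.eval z = false) :
    sInf {k : ℕ | ∃ r : Fin p → ℝ, DT.eval r = false ∧ SEVminus DT.eval x r = k} =
      sInf {d : ℕ | ∃ z : Fin p → ℝ, DT.eval z = false ∧ hammingDist x z = d} := by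
  obtain ⟨z0, hz0⟩ := hne
  apply le_antisymm
  · refine le_csInf ⟨hammingDist x z0, z0, hz0, rfl⟩ ?_
    rintro d ⟨z, hz, rfl⟩
    refine le_trans (Nat.sInf_le ⟨z, hz, rfl⟩) ?_
    have halign : align x z (Finset.univ.filter fun j => x j ≠ z j) = z := by
      funext j
      simp only [align, Finset.mem_filter, Finset.mem_univ, true_and]
      by_cases h : x j = z j <;> simp [h]
    apply Nat.sInf_le
    refine ⟨Finset.univ.filter fun j => x j ≠ z j, by rw [halign]; exact hz, ?_⟩
    rfl
  · refine le_csInf ⟨SEVminus DT.eval x z0, z0, hz0, rfl⟩ ?_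
    rintro k ⟨r, hr, rfl⟩
    have huniv : align x r Finset.univ = r := by
      funext j; simp [align]
    have hne' : {k : ℕ | ∃ S : Finset (Fin p),
        DT.eval (align x r S) = false ∧ S.card = k}.Nonempty :=
      ⟨Finset.univ.card, Finset.univ, by rw [huniv]; exact hr, rfl⟩
    obtain ⟨S, hS, hcard⟩ := Nat.sInf_mem hne'
    refine le_trans (Nat.sInf_le ⟨align x r S, hS, rfl⟩) ?_
    calc hammingDist x (align x r S)
        ≤ S.card := by
          refine Finset.card_le_card ?_
          intro j hj
          simp only [Finset.mem_filter, Finset.mem_univ, true_and] at hj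
          by_contra hjS
          exact hj (by simp [align, hjS])
      _ = SEVminus DT.eval x r := hcard
end

section
/- There exist a dimension p, a decision tree DT over ℝ^p, a query x ∈ ℝ^p with DT(x) = positive, and a reference r ∈ ℝ^p with DT(r) = negative, such that SEV⁻(DT, x, r) = 2 while min{‖x − z‖₀ : z ∈ ℝ^p, DT(z) = negative} = 1. Hence restricting the reference set to a single negatively predicted leaf can strictly increase SEV⁻ above its minimum over all negatively predicted references. -/
/-- There is a decision tree, a positively predicted query and a negatively
predicted reference for which `SEV⁻ = 2` while the minimum ℓ0 distance to the
negatively predicted region is `1`. -/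
theorem exists_tree_sevMinus_two_but_min_l0_one :
    ∃ (p : ℕ) (DT : DTree p) (x r : Fin p → ℝ),
      DT.eval x = true ∧ DT.eval r = false ∧
      SEVminus DT.eval x r = 2 ∧
      sInf {d : ℕ | ∃ z : Fin p → ℝ, DT.eval z = false ∧ hammingDist x z = d} = 1 := by
  refine ⟨2, .node 0 0 (.node 1 1 (.leaf true) (.leaf false))
      (.node 1 0 (.leaf false) (.leaf true)), ![1,1], ![0,2], ?_, ?_, ?_, ?_⟩
  · norm_num [DTree.eval]
  · norm_num [DTree.eval]
  · have h2 : 2 ∈ {k : ℕ | ∃ S : Finset (Fin 2),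
        DTree.eval (.node 0 0 (.node 1 1 (.leaf true) (.leaf false))
          (.node 1 0 (.leaf false) (.leaf true))) (align ![1,1] ![0,2] S) = false ∧ S.card = k} := by
      refine ⟨{0,1}, ?_, by decide⟩
      norm_num [DTree.eval, align]
    refine le_antisymm (Nat.sInf_le h2) (le_csInf ⟨2, h2⟩ ?_)
    rintro k ⟨S, hf, rfl⟩
    by_cases h0 : (0 : Fin 2) ∈ S <;> by_cases h1 : (1 : Fin 2) ∈ S
    · calc 2 = ({0,1} : Finset (Fin 2)).card := by decide
        _ ≤ S.card := Finset.card_le_card (by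
            intro i hi; fin_cases hi <;> assumption)
    · exfalso; norm_num [DTree.eval, align, h0, h1] at hf
    · exfalso; norm_num [DTree.eval, align, h0, h1] at hf
    · exfalso; norm_num [DTree.eval, align, h0, h1] at hf
  · have h1 : 1 ∈ {d : ℕ | ∃ z : Fin 2 → ℝ,
        DTree.eval (.node 0 0 (.node 1 1 (.leaf true) (.leaf false))
          (.node 1 0 (.leaf false) (.leaf true))) z = false ∧ hammingDist ![1,1] z = d} := by
      refine ⟨![1,0], by norm_num [DTree.eval], ?_⟩
      have : (Finset.univ.filter fun i => ![(1:ℝ),1] i ≠ ![1,0] i) = {1} := by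
        ext i; fin_cases i <;> norm_num
      simp [hammingDist, this]
    refine le_antisymm (Nat.sInf_le h1) ?_
    rw [Nat.one_le_iff_ne_zero]
    intro h0
    rcases Nat.sInf_eq_zero.mp h0 with h | h
    · rcases h with ⟨z, hz, hd⟩
      rw [hammingDist_eq_zero] at hd
      subst hd
      norm_num [DTree.eval] at hz
    · exact absurd h (Set.nonempty_iff_ne_empty.mp ⟨1, h1⟩)
end

section
/- Let DT be a decision tree over ℝ^p, let L be a leaf of DT whose region R_L is nonempty, let x ∈ ℝ^p, and let r ∈ R_L. Then min{|S| : S ⊆ {1,…,p}, align(x,r,S) ∈ R_L} = min{‖x − z‖₀ : z ∈ R_L}. In particular, this value is the same for every choice of reference r in R_L: the choice of reference point within a leaf does not influence the SEV computation with respect to that leaf. -/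

lemma follows_of_coords {p : ℕ} (π : List Bool) : ∀ (T : DTree p) (z w y : Fin p → ℝ),
    T.follows π z → T.follows π w → (∀ j, y j = z j ∨ y j = w j) → T.follows π y := by
  induction π with
  | nil => intro T z w y _ _ _; cases T <;> exact trivial
  | cons d ds ih =>
    intro T z w y hz hw hy
    cases T with
    | leaf b => exact hz.elim
    | node j t l r =>
      simp only [DTree.follows] at hz hw ⊢
      cases d <;> simp_all <;>
        exact ⟨by rcases hy j with h | h <;> rw [h] <;> tauto, ih _ z w y hz.2 hw.2 hy⟩

lemma sev_key {p : ℕ} (DT : DTree p) (π : List Bool)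
    (hne : (DT.regionAt π).Nonempty)
    (x r : Fin p → ℝ) (hr : r ∈ DT.regionAt π) :
    sInf {k : ℕ | ∃ S : Finset (Fin p), align x r S ∈ DT.regionAt π ∧ S.card = k} =
      sInf {d : ℕ | ∃ z ∈ DT.regionAt π, hammingDist x z = d} := by
  obtain ⟨z0, hz0⟩ := hne
  have key : ∀ z ∈ DT.regionAt π,
      align x r {j | x j ≠ z j} ∈ DT.regionAt π ∧
      ({j | x j ≠ z j} : Finset (Fin p)).card = hammingDist x z := by
    intro z hz
    constructor
    · refine follows_of_coords π DT z r _ hz hr (fun j => ?_)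
      by_cases h : x j = z j
      · left; simp [align, h]
      · right; simp [align, h]
    · rfl
  have hB : (∃ d, d ∈ {d : ℕ | ∃ z ∈ DT.regionAt π, hammingDist x z = d}) :=
    ⟨hammingDist x z0, z0, hz0, rfl⟩
  apply le_antisymm
  · obtain ⟨d, hd⟩ := hB
    obtain ⟨z, hz, hzd⟩ := Nat.sInf_mem ⟨d, hd⟩
    exact Nat.sInf_le ⟨_, (key z hz).1, by rw [(key z hz).2, hzd]⟩
  · have hA : (∃ k, k ∈ {k : ℕ | ∃ S : Finset (Fin p),
        align x r S ∈ DT.regionAt π ∧ S.card = k}) :=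
      ⟨_, _, (key z0 hz0).1, rfl⟩
    obtain ⟨S, hS, hSc⟩ := Nat.sInf_mem hA
    calc sInf {d : ℕ | ∃ z ∈ DT.regionAt π, hammingDist x z = d}
        ≤ hammingDist x (align x r S) := Nat.sInf_le ⟨_, hS, rfl⟩
      _ ≤ S.card := by
          apply Finset.card_le_card
          intro j hj
          simp only [Finset.mem_filter, Finset.mem_univ, true_and] at hj ⊢
          by_contra h
          exact hj (by simp [align, h])
      _ = _ := hSc

/-- For a leaf with nonempty region and any reference `r` in that region,
the minimum number of coordinates of `x` to align to `r` to land in the region equals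
the minimum ℓ0 distance from `x` to the region; in particular this value does not
depend on the choice of the reference within the region. -/
theorem sev_wrt_leaf_independent_of_reference
    {p : ℕ} (DT : DTree p) (π : List Bool) (b : Bool)
    (hleaf : DT.IsLeafAt π b)
    (hne : (DT.regionAt π).Nonempty)
    (x r : Fin p → ℝ) (hr : r ∈ DT.regionAt π) :
    sInf {k : ℕ | ∃ S : Finset (Fin p), align x r S ∈ DT.regionAt π ∧ S.card = k} =
      sInf {d : ℕ | ∃ z ∈ DT.regionAt π, hammingDist x z = d} ∧
    ∀ r' ∈ DT.regionAt π,
      sInf {k : ℕ | ∃ S : Finset (Fin p), align x r S ∈ DT.regionAt π ∧ S.card = k} =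
      sInf {k : ℕ | ∃ S : Finset (Fin p), align x r' S ∈ DT.regionAt π ∧ S.card = k} := by
  have h1 := sev_key DT π hne x r hr
  refine ⟨h1, fun r' hr' => ?_⟩
  rw [h1, sev_key DT π hne x r' hr']
end

section
/- Let p ≥ 1, let g : ℝ^p → ℝ be a score function, and classify a point z as positive if g(z) > 1/2 and negative otherwise. Let x ∈ ℝ^p satisfy g(x) > 1/2 and let r ∈ ℝ^p satisfy g(r) ≤ 1/2. Then the per-sample All-Opt⁻ loss max( min_{j ∈ {1,…,p}} g(align(x,r,{j})), 1/2 ) equals 1/2 if and only if SEV⁻ of x with reference r (with respect to this classifier) equals 1, and it is strictly greater than 1/2 if and only if SEV⁻ ≥ 2. -/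
/-- For a score function `g` with classifier "positive iff `g > 1/2`",
a positive query `x` and a negative reference `r`, the per-sample All-Opt⁻ loss
`max(min_j g(align x r {j}), 1/2)` equals `1/2` iff `SEV⁻ = 1`, and is strictly greater
than `1/2` iff `SEV⁻ ≥ 2`. -/
theorem allOpt_loss_characterizes_sev_one
    {p : ℕ} (hp : 1 ≤ p) (g : (Fin p → ℝ) → ℝ) (x r : Fin p → ℝ)
    (hx : 1 / 2 < g x) (hr : g r ≤ 1 / 2) :
    (max (⨅ j : Fin p, g (align x r {j})) (1 / 2) = 1 / 2 ↔
      SEVminus (fun z => decide (1 / 2 < g z)) x r = 1) ∧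
    (1 / 2 < max (⨅ j : Fin p, g (align x r {j})) (1 / 2) ↔
      2 ≤ SEVminus (fun z => decide (1 / 2 < g z)) x r) := by
  classical
  haveI hpn : Nonempty (Fin p) := ⟨⟨0, hp⟩⟩
  set f : (Fin p → ℝ) → Bool := fun z => decide (1 / 2 < g z) with hf
  set T : Set ℕ :=
    {k : ℕ | ∃ S : Finset (Fin p), f (align x r S) = false ∧ S.card = k} with hT
  have hSEV : SEVminus f x r = sInf T := rfl
  have hTp : p ∈ T := by
    refine ⟨Finset.univ, ?_, by simp⟩
    have h : align x r Finset.univ = r := by funext j; simp [align]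
    simp only [h, hf, decide_eq_false_iff_not, not_lt]
    exact hr
  have h0 : 0 ∉ T := by
    rintro ⟨S, hS, hcard⟩
    have hS0 : S = ∅ := Finset.card_eq_zero.mp hcard
    subst hS0
    have h : align x r ∅ = x := by funext j; simp [align]
    rw [h] at hS
    simp only [hf, decide_eq_false_iff_not, not_lt, one_div] at hS
    exact absurd hx (not_lt.mpr (by rw [one_div]; exact hS))
  have hne : T.Nonempty := ⟨p, hTp⟩
  have h1 : 1 ≤ sInf T := by
    have hmem := Nat.sInf_mem hne
    rcases Nat.eq_zero_or_pos (sInf T) with h | h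
    · exact absurd (h ▸ hmem) h0
    · exact h
  -- infimum attained
  obtain ⟨a, ha⟩ := Finite.exists_min (fun j : Fin p => g (align x r {j}))
  have hbdd : BddBelow (Set.range fun j : Fin p => g (align x r {j})) :=
    Set.Finite.bddBelow (Set.finite_range _)
  have hinf : (⨅ j : Fin p, g (align x r {j})) = g (align x r {a}) :=
    le_antisymm (ciInf_le hbdd a) (le_ciInf ha)
  have key : (⨅ j : Fin p, g (align x r {j})) ≤ 1 / 2 ↔ sInf T = 1 := by
    constructor
    · intro hle
      rw [hinf] at hle
      have h1T : 1 ∈ T := ⟨{a}, by simp only [hf, decide_eq_false_iff_not, not_lt]; exact hle, by simp⟩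
      exact le_antisymm (Nat.sInf_le h1T) h1
    · intro heq
      have hmem := Nat.sInf_mem hne
      rw [heq] at hmem
      obtain ⟨S, hS, hcard⟩ := hmem
      obtain ⟨j, hj⟩ := Finset.card_eq_one.mp hcard
      subst hj
      have hgj : g (align x r {j}) ≤ 1 / 2 := by
        by_contra hc
        simp only [hf, decide_eq_false_iff_not, not_lt, one_div] at hS
        exact hc (by rw [one_div]; exact hS)
      calc (⨅ j : Fin p, g (align x r {j})) ≤ g (align x r {j}) := ciInf_le hbdd j
        _ ≤ 1 / 2 := hgj
  constructor
  · rw [max_eq_right_iff, hSEV]; exact key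
  · rw [hSEV]
    constructor
    · intro hlt
      rcases lt_max_iff.mp hlt with h | h
      · have : ¬ sInf T = 1 := by
          intro he
          exact absurd (key.mpr he) (not_le.mpr h)
        omega
      · exact absurd h (lt_irrefl _)
    · intro h2
      have hni : ¬ (⨅ j : Fin p, g (align x r {j})) ≤ 1 / 2 := by
        intro hle
        have := key.mp hle
        omega
      exact lt_max_iff.mpr (Or.inl (lt_of_not_ge hni))
end

section
/- Let w ∈ ℝ^p, c ∈ ℝ, let g(z) = c + Σ_{j=1}^p w_j z_j, and classify z as positive if g(z) > 0 and negative otherwise. Let x ∈ ℝ^p satisfy g(x) > 0 and let r, r' ∈ ℝ^p be references such that for every coordinate j, w_j (x_j − r'_j) ≥ w_j (x_j − r_j). Then for every S ⊆ {1,…,p}, g(align(x,r',S)) ≤ g(align(x,r,S)); consequently every subset S whose alignment to r is predicted negative also has its alignment to r' predicted negative, and if SEV⁻ of x with reference r is defined then SEV⁻ of x with reference r' is defined and SEV⁻(x,r') ≤ SEV⁻(x,r). That is, for a linear classifier, moving the reference coordinatewise farther from the decision boundary cannot increase SEV⁻. -/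
/-- Affine score function of a linear classifier. -/
noncomputable def linScore {p : ℕ} (w : Fin p → ℝ) (c : ℝ) (z : Fin p → ℝ) : ℝ :=
  c + ∑ j, w j * z j

theorem linScore_align_le_of_forall_mem {p : ℕ} (w : Fin p → ℝ) (c : ℝ) (x r r' : Fin p → ℝ)
    (S : Finset (Fin p)) (h : ∀ j ∈ S, w j * r' j ≤ w j * r j) :
    linScore w c (align x r' S) ≤ linScore w c (align x r S) := by
  refine add_le_add_right (Finset.sum_le_sum fun j _ => ?_) c
  by_cases hj : j ∈ S
  · simpa only [align, hj, if_true] using h j hj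
  · simp only [align, hj, if_false, le_refl]

theorem SEVminus_le_of_forall_neg {p : ℕ} (f : (Fin p → ℝ) → Bool) (x r r' : Fin p → ℝ)
    (hneg : ∀ S, f (align x r S) = false → f (align x r' S) = false)
    (hex : ∃ S, f (align x r S) = false) :
    SEVminus f x r' ≤ SEVminus f x r := by
  obtain ⟨S, hS⟩ := hex
  obtain ⟨T, hT, hTcard⟩ := Nat.sInf_mem (⟨S.card, S, hS, rfl⟩ :
    {k : ℕ | ∃ S : Finset (Fin p), f (align x r S) = false ∧ S.card = k}.Nonempty)
  exact Nat.sInf_le ⟨T, hneg T hT, hTcard⟩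

theorem linear_sev_monotone_in_reference_general
    {p : ℕ} (w : Fin p → ℝ) (c : ℝ) (x r r' : Fin p → ℝ)
    (hfar : ∀ j, w j * (x j - r j) ≤ w j * (x j - r' j)) :
    (∀ S : Finset (Fin p), linScore w c (align x r' S) ≤ linScore w c (align x r S)) ∧
    (∀ S : Finset (Fin p),
      decide (0 < linScore w c (align x r S)) = false →
      decide (0 < linScore w c (align x r' S)) = false) ∧
    ((∃ S : Finset (Fin p), decide (0 < linScore w c (align x r S)) = false) →
      (∃ S : Finset (Fin p), decide (0 < linScore w c (align x r' S)) = false) ∧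
      SEVminus (fun z => decide (0 < linScore w c z)) x r' ≤
        SEVminus (fun z => decide (0 < linScore w c z)) x r) := by
  have hscore : ∀ S : Finset (Fin p), linScore w c (align x r' S) ≤ linScore w c (align x r S) :=
    fun S => linScore_align_le_of_forall_mem w c x r r' S fun j _ => by linarith [hfar j]
  have hneg : ∀ S : Finset (Fin p),
      decide (0 < linScore w c (align x r S)) = false →
      decide (0 < linScore w c (align x r' S)) = false := by
    simp only [decide_eq_false_iff_not, not_lt]
    exact fun S hS => (hscore S).trans hS
  exact ⟨hscore, hneg, fun hex => ⟨hex.imp hneg, SEVminus_le_of_forall_neg _ x r r' hneg hex⟩⟩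

/-- For a linear classifier "positive iff `g > 0`", if the reference `r'`
is coordinatewise farther from the decision boundary than `r` (in the sense
`w j * (x j − r j) ≤ w j * (x j − r' j)` for all `j`), then every alignment to `r'`
scores no higher than the corresponding alignment to `r`; hence every negatively
predicted alignment to `r` stays negative for `r'`, and `SEV⁻(x, r') ≤ SEV⁻(x, r)`
whenever the latter is defined. -/
theorem linear_sev_monotone_in_reference
    {p : ℕ} (w : Fin p → ℝ) (c : ℝ) (x r r' : Fin p → ℝ)
    (hx : 0 < linScore w c x)
    (hfar : ∀ j, w j * (x j - r j) ≤ w j * (x j - r' j)) :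
    (∀ S : Finset (Fin p), linScore w c (align x r' S) ≤ linScore w c (align x r S)) ∧
    (∀ S : Finset (Fin p),
      decide (0 < linScore w c (align x r S)) = false →
      decide (0 < linScore w c (align x r' S)) = false) ∧
    ((∃ S : Finset (Fin p), decide (0 < linScore w c (align x r S)) = false) →
      (∃ S : Finset (Fin p), decide (0 < linScore w c (align x r' S)) = false) ∧
      SEVminus (fun z => decide (0 < linScore w c z)) x r' ≤
        SEVminus (fun z => decide (0 < linScore w c z)) x r) :=
  linear_sev_monotone_in_reference_general w c x r r' hfar
end

section
/- There exist a dimension p, a decision tree DT over ℝ^p, and a query x ∈ ℝ^p with DT(x) = positive such that min{‖x − z‖₀ : DT(z) = negative} = 1, yet no node on the decision path of x has, on the branch not taken by x, a child that is a leaf labeled negative (in particular, the leaf capturing x has no sibling leaf labeled negative). Hence the sufficient condition of Theorem 4.1 for SEV_T = 1 is not necessary. -/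
/-- There are a decision tree and a positively predicted query whose
minimum ℓ0 distance to the negatively predicted region is 1, yet no node on the decision
path of the query has a negative leaf as the child on the branch not taken. Hence the
sufficient condition of Theorem 4.1 for `SEV_T = 1` is not necessary. -/
theorem sevT_one_sufficient_condition_not_necessary :
    ∃ (p : ℕ) (DT : DTree p) (x : Fin p → ℝ),
      DT.eval x = true ∧
      sInf {d : ℕ | ∃ z : Fin p → ℝ, DT.eval z = false ∧ hammingDist x z = d} = 1 ∧
      ∀ (π : List Bool) (j : Fin p) (t : ℝ) (l r : DTree p),
        DT.follows π x → DT.subtreeAt π = some (.node j t l r) →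
        ¬ DT.IsLeafAt (π ++ [decide (x j ≤ t)]) false := by
  refine ⟨2, .node 0 0 (.leaf true) (.node 1 0 (.leaf false) (.leaf true)), fun _ => 0,
    ?_, ?_, ?_⟩
  · simp [DTree.eval]
  · have hz : DTree.eval (.node 0 0 (.leaf true) (.node 1 0 (.leaf false) (.leaf true)))
        (![1, 0] : Fin 2 → ℝ) = false := by norm_num [DTree.eval]
    have hd : hammingDist (fun _ => (0:ℝ)) (![1, 0] : Fin 2 → ℝ) = 1 := by
      have : (Finset.univ.filter fun i : Fin 2 => (fun _ => (0:ℝ)) i ≠ ![1,0] i) = {0} := by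
        ext i
        fin_cases i <;> simp
      rw [hammingDist, this, Finset.card_singleton]
    apply le_antisymm
    · exact Nat.sInf_le ⟨![1,0], hz, hd⟩
    · refine le_csInf ⟨1, ⟨![1,0], hz, hd⟩⟩ ?_
      rintro d ⟨z, hez, hdz⟩
      by_contra h
      push_neg at h
      interval_cases d
      rw [hammingDist_eq_zero] at hdz
      rw [← hdz] at hez
      simp [DTree.eval] at hez
  · rintro (_ | ⟨(_|_), (_ | ⟨b2, rest⟩)⟩) j t l r hf hs <;>
      simp_all [DTree.follows, DTree.subtreeAt, DTree.IsLeafAt]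
end
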